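/- arXiv:1204.3182 — 7 statements merged into one kernel-verified Lean document; each statement's English description precedes it below -/
import Mathlib

section
/- A nonnegative square matrix A has a nonnegative inverse if and only if A is monomial, i.e., every row and every column of A contains exactly one positive entry and all other entries are zero. -/
open scoped Matrix Classical
open MeasureTheory

attribute [local instance] Matrix.linftyOpNormedRing Matrix.linftyOpNormedAlgebra

/-- A nonnegative square matrix is monomial: each row and each column contains
exactly one strictly positive entry, all other entries being zero. -/
def IsMonomial {n : ℕ} (A : Matrix (Fin n) (Fin n) ℝ) : Prop :=
  (∀ i j, 0 ≤ A i j) ∧ (∀ i, ∃! j, 0 < A i j) ∧ (∀ j, ∃! i, 0 < A i j)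

theorem nonneg_inverse_iff_monomial (n : ℕ) (A : Matrix (Fin n) (Fin n) ℝ)
    (hA : ∀ i j, 0 ≤ A i j) :
    (∃ B : Matrix (Fin n) (Fin n) ℝ, A * B = 1 ∧ B * A = 1 ∧ ∀ i j, 0 ≤ B i j) ↔
      IsMonomial A := by
  constructor
  · rintro ⟨B, hAB, hBA, hB⟩
    -- key: if A i j > 0 and B j m > 0 then i = m
    have key1 : ∀ i j m, 0 < A i j → 0 < B j m → i = m := by
      intro i j m h1 h2
      by_contra hne
      have h0 : (A * B) i m = 0 := by rw [hAB, Matrix.one_apply_ne hne]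
      rw [Matrix.mul_apply] at h0
      have hle : A i j * B j m ≤ ∑ k, A i k * B k m :=
        Finset.single_le_sum (fun k _ => mul_nonneg (hA i k) (hB k m))
          (Finset.mem_univ j)
      nlinarith
    have key2 : ∀ j i k, 0 < B j i → 0 < A i k → j = k := by
      intro j i k h1 h2
      by_contra hne
      have h0 : (B * A) j k = 0 := by rw [hBA, Matrix.one_apply_ne hne]
      rw [Matrix.mul_apply] at h0
      have hle : B j i * A i k ≤ ∑ m, B j m * A m k :=
        Finset.single_le_sum (fun m _ => mul_nonneg (hB j m) (hA m k))
          (Finset.mem_univ i)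
      nlinarith
    -- from diagonal entries, extract positive products
    have diagAB : ∀ i, ∃ j, 0 < A i j ∧ 0 < B j i := by
      intro i
      have h1 : (A * B) i i = 1 := by rw [hAB, Matrix.one_apply_eq]
      rw [Matrix.mul_apply] at h1
      by_contra hcon
      push_neg at hcon
      have : ∑ j, A i j * B j i = 0 := by
        apply Finset.sum_eq_zero
        intro j _
        rcases lt_or_eq_of_le (hA i j) with h | h
        · rcases lt_or_eq_of_le (hB j i) with h' | h'
          · exact absurd h' (not_lt.mpr (hcon j h))
          · rw [← h', mul_zero]
        · rw [← h, zero_mul]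
      rw [this] at h1; norm_num at h1
    have diagBA : ∀ j, ∃ i, 0 < B j i ∧ 0 < A i j := by
      intro j
      have h1 : (B * A) j j = 1 := by rw [hBA, Matrix.one_apply_eq]
      rw [Matrix.mul_apply] at h1
      by_contra hcon
      push_neg at hcon
      have : ∑ i, B j i * A i j = 0 := by
        apply Finset.sum_eq_zero
        intro i _
        rcases lt_or_eq_of_le (hB j i) with h | h
        · rcases lt_or_eq_of_le (hA i j) with h' | h'
          · exact absurd h' (not_lt.mpr (hcon i h))
          · rw [← h', mul_zero]
        · rw [← h, zero_mul]
      rw [this] at h1; norm_num at h1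
    refine ⟨hA, ?_, ?_⟩
    · intro i
      obtain ⟨j, hAij, hBji⟩ := diagAB i
      exact ⟨j, hAij, fun j' hj' => (key2 j i j' hBji hj').symm⟩
    · intro j
      obtain ⟨i, hBji, hAij⟩ := diagBA j
      exact ⟨i, hAij, fun i' hi' => key1 i' j i hi' hBji⟩
  · rintro ⟨-, hrow, hcol⟩
    -- σ i is the unique positive column in row i
    set σ : Fin n → Fin n := fun i => (hrow i).choose with hσ
    have hσpos : ∀ i, 0 < A i (σ i) := fun i => (hrow i).choose_spec.1
    have hσuniq : ∀ i k, 0 < A i k → k = σ i := fun i k h =>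
      (hrow i).choose_spec.2 k h
    have hzero : ∀ i k, k ≠ σ i → A i k = 0 := by
      intro i k hk
      rcases lt_or_eq_of_le (hA i k) with h | h
      · exact absurd (hσuniq i k h) hk
      · exact h.symm
    have hcoluniq : ∀ i m, 0 < A i (σ m) → i = m := by
      intro i m h
      obtain ⟨i₀, -, huniq⟩ := hcol (σ m)
      rw [huniq i h, huniq m (hσpos m)]
    refine ⟨Matrix.of fun j i => if j = σ i then (A i j)⁻¹ else 0, ?_, ?_, ?_⟩
    · ext i m
      rw [Matrix.mul_apply]
      have hsum : ∀ k ∈ Finset.univ, k ≠ σ m →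
          A i k * (Matrix.of fun j i => if j = σ i then (A i j)⁻¹ else 0) k m = 0 := by
        intro k _ hk
        simp [Matrix.of_apply, hk]
      rw [Finset.sum_eq_single (σ m) hsum (fun h => absurd (Finset.mem_univ _) h)]
      simp only [Matrix.of_apply, if_pos rfl, if_true]
      by_cases him : i = m
      · subst him
        rw [mul_inv_cancel₀ (ne_of_gt (hσpos i)), Matrix.one_apply_eq]
      · rw [Matrix.one_apply_ne him]
        have : A i (σ m) = 0 := by
          rcases lt_or_eq_of_le (hA i (σ m)) with h | h
          · exact absurd (hcoluniq i m h) him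
          · exact h.symm
        rw [this, zero_mul]
    · rw [← mul_eq_one_comm]
      ext i m
      rw [Matrix.mul_apply]
      have hsum : ∀ k ∈ Finset.univ, k ≠ σ m →
          A i k * (Matrix.of fun j i => if j = σ i then (A i j)⁻¹ else 0) k m = 0 := by
        intro k _ hk
        simp [Matrix.of_apply, hk]
      rw [Finset.sum_eq_single (σ m) hsum (fun h => absurd (Finset.mem_univ _) h)]
      simp only [Matrix.of_apply, if_pos rfl, if_true]
      by_cases him : i = m
      · subst him
        rw [mul_inv_cancel₀ (ne_of_gt (hσpos i)), Matrix.one_apply_eq]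
      · rw [Matrix.one_apply_ne him]
        have : A i (σ m) = 0 := by
          rcases lt_or_eq_of_le (hA i (σ m)) with h | h
          · exact absurd (hcoluniq i m h) him
          · exact h.symm
        rw [this, zero_mul]
    · intro i j
      dsimp [Matrix.of_apply]
      split
      · exact inv_nonneg.mpr (hA j i)
      · exact le_refl 0
end

section
/- For an n×n real matrix A, the matrix exponential e^{A t} has all entries nonnegative for every t ≥ 0 if and only if A is a Metzler matrix, i.e., all off-diagonal entries of A are nonnegative. -/
open scoped Matrix Classical
open MeasureTheory

attribute [local instance] Matrix.linftyOpNormedRing Matrix.linftyOpNormedAlgebra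

/-! For `i ≠ j` the entry `t ↦ (e^{tA}) i j` vanishes at `0` and is nonnegative for `t ≥ 0`, so
its right derivative `A i j` at `0` is nonnegative. Conversely, a Metzler matrix becomes entrywise
nonnegative after adding `c • 1` for large `c`; the exponential series of a nonnegative matrix is
nonnegative, and `e^{A + c • 1} = e^c e^A` since `c • 1` is central. -/

open NormedSpace Set
open scoped Nat

theorem HasDerivWithinAt.nonneg_of_isMinOn_Ici {f : ℝ → ℝ} {f' a : ℝ}
    (hf : HasDerivWithinAt f f' (Ici a) a) (hmin : IsMinOn f (Ici a) a) : 0 ≤ f' := by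
  have hcone : (1 : ℝ) ∈ posTangentConeAt (Ici a) a :=
    mem_posTangentConeAt_of_segment_subset
      ((segment_subset_Icc (by simp)).trans Icc_subset_Ici_self)
  simpa using hmin.localize.hasFDerivWithinAt_nonneg hf.hasFDerivWithinAt hcone

namespace Matrix

variable {ι : Type*} [Fintype ι] [DecidableEq ι]

theorem exp_apply_nonneg {B : Matrix ι ι ℝ} (hB : ∀ i j, 0 ≤ B i j) (i j : ι) :
    0 ≤ exp B i j := by
  have hsum : HasSum (fun k : ℕ => ((k ! : ℝ)⁻¹ • B ^ k) i j) (exp B i j) :=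
    Pi.hasSum.mp (Pi.hasSum.mp (exp_series_hasSum_exp' (𝕂 := ℝ) B) i) j
  exact hsum.nonneg fun k => mul_nonneg (by positivity) (pow_apply_nonneg hB k i j)

theorem exp_add_smul_one (A : Matrix ι ι ℝ) (c : ℝ) :
    exp (A + c • 1) = Real.exp c • exp A := by
  rw [exp_add_of_commute _ _ ((Commute.one_right A).smul_right c),
    ← Algebra.algebraMap_eq_smul_one]
  erw [← algebraMap_exp_comm (𝕂 := ℝ) (𝔸 := Matrix ι ι ℝ) c]
  rw [← Algebra.commutes, ← Algebra.smul_def, Real.exp_eq_exp_ℝ]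

theorem exists_add_smul_one_nonneg {A : Matrix ι ι ℝ} (hA : ∀ i j, i ≠ j → 0 ≤ A i j) :
    ∃ c : ℝ, ∀ i j, 0 ≤ (A + c • 1) i j := by
  refine ⟨∑ k, |A k k|, fun i j => ?_⟩
  rcases eq_or_ne i j with rfl | hij
  · have hdiag : |A i i| ≤ ∑ k, |A k k| :=
      Finset.single_le_sum (fun k _ => abs_nonneg (A k k)) (Finset.mem_univ i)
    simp only [add_apply, smul_apply, one_apply_eq, smul_eq_mul, mul_one]
    linarith [neg_abs_le (A i i)]
  · simpa [one_apply_ne hij] using hA i j hij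

theorem exp_apply_nonneg_of_metzler {A : Matrix ι ι ℝ} (hA : ∀ i j, i ≠ j → 0 ≤ A i j)
    (i j : ι) : 0 ≤ exp A i j := by
  obtain ⟨c, hc⟩ := exists_add_smul_one_nonneg hA
  have hshift : 0 ≤ Real.exp c * exp A i j := by
    simpa [exp_add_smul_one] using exp_apply_nonneg hc i j
  exact nonneg_of_mul_nonneg_right hshift (Real.exp_pos c)

theorem hasDerivAt_exp_smul_apply_zero (A : Matrix ι ι ℝ) (i j : ι) :
    HasDerivAt (fun t : ℝ => exp (t • A) i j) (A i j) 0 := by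
  have hexp := hasDerivAt_exp_smul_const' (𝕂 := ℝ) A 0
  rw [zero_smul, exp_zero, mul_one] at hexp
  exact (entryLinearMap ℝ ℝ i j).toContinuousLinearMap.hasFDerivAt.comp_hasDerivAt 0 hexp

end Matrix

theorem exp_nonneg_iff_metzler (n : ℕ) (A : Matrix (Fin n) (Fin n) ℝ) :
    (∀ t : ℝ, 0 ≤ t → ∀ i j, 0 ≤ NormedSpace.exp (t • A) i j) ↔
      (∀ i j, i ≠ j → 0 ≤ A i j) := by
  refine ⟨fun h i j hij => ?_, fun hA t ht => Matrix.exp_apply_nonneg_of_metzler ?_⟩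
  · refine (A.hasDerivAt_exp_smul_apply_zero i j).hasDerivWithinAt.nonneg_of_isMinOn_Ici ?_
    intro t ht
    simpa [Matrix.one_apply_ne hij] using h t ht i j
  · intro i j hij
    exact mul_nonneg ht (hA i j hij)
end

section
/- Let 𝕋 = μℤ with μ > 0 and consider the positive system x(t+μ) = (I+μA)x(t) + μBu(t) started at x(t₀) = 0. If the matrix [B, (I+μA)B, …, (I+μA)^{k−1}B] contains an n×n monomial submatrix (formed from n of its columns), then every vector in ℝⁿ₊ can be reached at time t₀ + kμ using nonnegative controls. -/
/-!
Each monomial column is a positive multiple `c l • e l` of a distinct unit vector, so a nonnegative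
target `x = ∑ l, x l • e l` is reached by feeding `x l / (μ * c l)` into the input channel and
time step that produce the `l`-th column, and zero everywhere else. The time index is reversed
because `u (k - 1 - i)` is the input multiplied by `(1 + μ • A) ^ i`.
-/

open scoped Matrix Classical
open MeasureTheory

attribute [local instance] Matrix.linftyOpNormedRing Matrix.linftyOpNormedAlgebra

open Finset Matrix

section ColumnControl

variable {ι κ R : Type*} [Fintype ι] [DecidableEq κ]

def columnControl [AddCommMonoid R] (f : ι → ℕ × κ) (w : ι → R) (i : ℕ) : κ → R :=
  ∑ l, if (f l).1 = i then Pi.single (f l).2 (w l) else 0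

theorem columnControl_nonneg [AddCommMonoid R] [PartialOrder R] [IsOrderedAddMonoid R]
    (f : ι → ℕ × κ) {w : ι → R} (hw : 0 ≤ w) (i : ℕ) : 0 ≤ columnControl f w i :=
  sum_nonneg fun l _ => by
    split_ifs
    · exact Pi.single_nonneg.2 (hw l)
    · exact le_rfl

theorem sum_mulVec_columnControl {ρ : Type*} [Fintype κ] [CommSemiring R] (G : ℕ → Matrix ρ κ R)
    (f : ι → ℕ × κ) (w : ι → R) {k : ℕ} (hk : ∀ l, (f l).1 < k) :
    ∑ i ∈ range k, G i *ᵥ columnControl f w i = ∑ l, w l • (G (f l).1).col (f l).2 := by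
  simp only [columnControl, mulVec_sum, apply_ite, mulVec_zero]
  rw [sum_comm]
  refine sum_congr rfl fun l _ => ?_
  rw [sum_ite_eq, if_pos (mem_range.2 (hk l)), mulVec_single, op_smul_eq_smul]

theorem exists_nonneg_sum_mulVec_eq [DecidableEq ι] [Fintype κ]
    [Field R] [LinearOrder R] [IsStrictOrderedRing R]
    (G : ℕ → Matrix ι κ R) (f : ι → ℕ × κ) (c : ι → R) {k : ℕ} (hk : ∀ l, (f l).1 < k)
    (hc : ∀ l, 0 < c l) (hcol : ∀ l, (G (f l).1).col (f l).2 = Pi.single l (c l))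
    {x : ι → R} (hx : 0 ≤ x) :
    ∃ v : ℕ → κ → R, (∀ i, 0 ≤ v i) ∧ x = ∑ i ∈ range k, G i *ᵥ v i := by
  refine ⟨columnControl f (fun l => x l / c l),
    columnControl_nonneg f fun l => div_nonneg (hx l) (hc l).le, ?_⟩
  rw [sum_mulVec_columnControl G f _ hk]
  conv_lhs => rw [← univ_sum_single x]
  refine sum_congr rfl fun l _ => ?_
  rw [hcol, ← Pi.single_smul', smul_eq_mul, div_mul_cancel₀ _ (hc l).ne']

end ColumnControl

theorem monomial_submatrix_implies_positive_reachability_general (n m k : ℕ) (μ : ℝ) (hμ : 0 < μ)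
    (A : Matrix (Fin n) (Fin n) ℝ) (B : Matrix (Fin n) (Fin m) ℝ)
    (hmono : ∃ (f : Fin n → Fin k × Fin m) (c : Fin n → ℝ), (∀ l, 0 < c l) ∧
      ∀ l, (((1 + μ • A) ^ ((f l).1 : ℕ)).mulVec fun p => B p (f l).2) =
        c l • (Pi.single l 1 : Fin n → ℝ)) :
    ∀ xbar : Fin n → ℝ, (∀ i, 0 ≤ xbar i) →
      ∃ u : ℕ → Fin m → ℝ, (∀ j i, 0 ≤ u j i) ∧
        xbar = ∑ i ∈ Finset.range k,
          μ • ((1 + μ • A) ^ i).mulVec (B.mulVec (u (k - 1 - i))) := by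
  obtain ⟨f, c, hc, hf⟩ := hmono
  intro xbar hx
  have hcol : ∀ l, (μ • (1 + μ • A) ^ ((f l).1 : ℕ) * B).col (f l).2 = Pi.single l (μ * c l) := by
    intro l
    rw [← mulVec_single_one, ← mulVec_mulVec, mulVec_single_one, smul_mulVec]
    change μ • ((1 + μ • A) ^ _ *ᵥ fun p => B p _) = _
    rw [hf l, smul_smul, ← Pi.single_smul', smul_eq_mul, mul_one]
  obtain ⟨v, hv, hsum⟩ := exists_nonneg_sum_mulVec_eq (fun i => μ • (1 + μ • A) ^ i * B)
    (fun l => ((f l).1, (f l).2)) (fun l => μ * c l) (fun l => (f l).1.isLt)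
    (fun l => mul_pos hμ (hc l)) hcol hx
  refine ⟨fun t => v (k - 1 - t), fun t => hv _, hsum.trans (sum_congr rfl fun i hi => ?_)⟩
  dsimp only
  rw [Nat.sub_sub_self (Nat.le_sub_one_of_lt (mem_range.1 hi)), ← mulVec_mulVec, smul_mulVec]

theorem monomial_submatrix_implies_positive_reachability (n m k : ℕ) (μ : ℝ) (hμ : 0 < μ)
    (A : Matrix (Fin n) (Fin n) ℝ) (B : Matrix (Fin n) (Fin m) ℝ)
    (hpos : ∀ i j, 0 ≤ (1 + μ • A) i j) (hB : ∀ i j, 0 ≤ B i j)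
    (hmono : ∃ (f : Fin n → Fin k × Fin m) (c : Fin n → ℝ), (∀ l, 0 < c l) ∧
      ∀ l, (((1 + μ • A) ^ ((f l).1 : ℕ)).mulVec fun p => B p (f l).2) =
        c l • (Pi.single l 1 : Fin n → ℝ)) :
    ∀ xbar : Fin n → ℝ, (∀ i, 0 ≤ xbar i) →
      ∃ u : ℕ → Fin m → ℝ, (∀ j i, 0 ≤ u j i) ∧
        xbar = ∑ i ∈ Finset.range k,
          μ • ((1 + μ • A) ^ i).mulVec (B.mulVec (u (k - 1 - i))) :=
  monomial_submatrix_implies_positive_reachability_general n m k μ hμ A B hmono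
end

section
/- Let 𝕋 = μℤ with μ > 0. The positive system x(t+μ) = (I+μA)x(t) + μBu(t) with x(t₀)=0 is positively reachable at time t₀ + kμ (every vector of ℝⁿ₊ is reachable with nonnegative controls) if and only if the matrix [B, (I+μA)B, …, (I+μA)^{k−1}B] contains an n×n monomial submatrix. -/
/-!
The states reachable from `0` with nonnegative controls are exactly the nonnegative combinations
of the columns `M ^ i * B e_j` (`i < k`) of the reachability matrix, `M = 1 + μ • A`; the factor
`μ > 0` only rescales the controls. Such a cone of nonnegative vectors contains the orthant iff it
contains every `e_l`, and in a nonnegative combination equal to `e_l` every column used with a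
positive weight vanishes off `l`, i.e. is a positive multiple of `e_l`.
-/

open scoped Matrix Classical
open MeasureTheory

attribute [local instance] Matrix.linftyOpNormedRing Matrix.linftyOpNormedAlgebra

def IsNonnegCombination {ι σ : Type*} [Fintype ι] (v : ι → σ → ℝ) (x : σ → ℝ) : Prop :=
  ∃ a : ι → ℝ, 0 ≤ a ∧ x = ∑ i, a i • v i

section Cone

variable {ι σ : Type*} [Fintype ι] {v : ι → σ → ℝ}

theorem IsNonnegCombination.exists_eq_smul_single [DecidableEq σ] (hv : ∀ i, 0 ≤ v i) {l : σ}
    (h : IsNonnegCombination v (Pi.single l 1)) :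
    ∃ i, ∃ c : ℝ, 0 < c ∧ v i = c • Pi.single l 1 := by
  obtain ⟨a, ha, hsum⟩ := h
  have hterm : ∀ p i, 0 ≤ a i * v i p := fun p i => mul_nonneg (ha i) (hv i p)
  have hsum_apply : ∀ p, (Pi.single l 1 : σ → ℝ) p = ∑ i, a i * v i p := fun p => by
    simp [hsum, Finset.sum_apply]
  obtain ⟨i, -, hi⟩ : ∃ i ∈ Finset.univ, 0 < a i * v i l := by
    rw [← Finset.sum_pos_iff_of_nonneg fun i _ => hterm l i, ← hsum_apply]
    simp
  have hai : 0 < a i := pos_of_mul_pos_left hi (hv i l)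
  refine ⟨i, v i l, pos_of_mul_pos_right hi hai.le, funext fun p => ?_⟩
  rcases eq_or_ne p l with rfl | hp
  · simp
  have hzero := (Finset.sum_eq_zero_iff_of_nonneg fun i _ => hterm p i).1
    (by rw [← hsum_apply, Pi.single_eq_of_ne hp]) i (Finset.mem_univ i)
  simpa [Pi.single_eq_of_ne hp, hai.ne'] using hzero

theorem IsNonnegCombination.of_forall_eq_smul_single [Fintype σ] [DecidableEq σ] {f : σ → ι}
    {c : σ → ℝ} (hc : ∀ l, 0 < c l) (hf : ∀ l, v (f l) = c l • Pi.single l 1) {x : σ → ℝ}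
    (hx : 0 ≤ x) :
    IsNonnegCombination v x := by
  refine ⟨fun i => ∑ l with f l = i, x l / c l, fun i => Finset.sum_nonneg fun l _ =>
    div_nonneg (hx l) (hc l).le, ?_⟩
  calc x = ∑ l, (x l / c l) • v (f l) := by
        ext p
        simp [hf, smul_smul, div_mul_cancel₀ _ (hc _).ne', Finset.sum_apply, Pi.single_apply]
    _ = ∑ i, (∑ l with f l = i, x l / c l) • v i := by
        simp_rw [Finset.sum_smul]
        rw [← Finset.sum_fiberwise _ f]
        refine Finset.sum_congr rfl fun i _ => Finset.sum_congr rfl fun l hl => ?_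
        rw [(Finset.mem_filter.1 hl).2]

theorem forall_isNonnegCombination_iff [Fintype σ] [DecidableEq σ] (hv : ∀ i, 0 ≤ v i) :
    (∀ x, 0 ≤ x → IsNonnegCombination v x) ↔
      ∃ (f : σ → ι) (c : σ → ℝ), (∀ l, 0 < c l) ∧ ∀ l, v (f l) = c l • Pi.single l 1 := by
  constructor
  · intro h
    choose f c hc hf using fun l =>
      (h (Pi.single l 1) (Pi.single_nonneg.2 zero_le_one)).exists_eq_smul_single hv
    exact ⟨f, c, hc, hf⟩
  · rintro ⟨f, c, hc, hf⟩ x hx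
    exact .of_forall_eq_smul_single hc hf hx

end Cone

theorem Matrix.mulVec_nonneg {ι κ : Type*} [Fintype κ] {M : Matrix ι κ ℝ} (hM : ∀ i j, 0 ≤ M i j)
    {v : κ → ℝ} (hv : 0 ≤ v) : 0 ≤ M *ᵥ v :=
  fun i => Finset.sum_nonneg fun j _ => mul_nonneg (hM i j) (hv j)

section Reachability

variable {σ κ : Type*} [Fintype σ] [DecidableEq σ] (M : Matrix σ σ ℝ) (B : Matrix σ κ ℝ) (k : ℕ)

def reachabilityColumn (ij : Fin k × κ) : σ → ℝ :=
  (M ^ (ij.1 : ℕ)) *ᵥ fun p => B p ij.2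

variable {M B k}

theorem reachabilityColumn_nonneg (hM : ∀ i j, 0 ≤ M i j) (hB : ∀ i j, 0 ≤ B i j)
    (ij : Fin k × κ) : 0 ≤ reachabilityColumn M B k ij :=
  Matrix.mulVec_nonneg (Matrix.pow_apply_nonneg hM _) fun p => hB p ij.2

variable [Fintype κ]

theorem sum_range_smul_pow_mulVec_eq (μ : ℝ) (u : ℕ → κ → ℝ) :
    ∑ i ∈ Finset.range k, μ • (M ^ i) *ᵥ (B *ᵥ u (k - 1 - i)) =
      ∑ ij : Fin k × κ, (μ * u (k - 1 - ij.1) ij.2) • reachabilityColumn M B k ij := by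
  have hB : ∀ w : κ → ℝ, B *ᵥ w = ∑ j, w j • fun p => B p j := fun w => by
    ext p; simp [Matrix.mulVec, dotProduct, Finset.sum_apply, mul_comm]
  rw [Finset.sum_range, Fintype.sum_prod_type]
  refine Finset.sum_congr rfl fun i _ => ?_
  simp only [hB, Matrix.mulVec_sum, Matrix.mulVec_smul, Finset.smul_sum, smul_smul,
    reachabilityColumn]

theorem exists_nonneg_control_iff {μ : ℝ} (hμ : 0 < μ) (x : σ → ℝ) :
    (∃ u : ℕ → κ → ℝ, (∀ t j, 0 ≤ u t j) ∧
        x = ∑ i ∈ Finset.range k, μ • (M ^ i) *ᵥ (B *ᵥ u (k - 1 - i))) ↔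
      IsNonnegCombination (reachabilityColumn M B k) x := by
  simp_rw [sum_range_smul_pow_mulVec_eq]
  constructor
  · rintro ⟨u, hu, rfl⟩
    exact ⟨_, fun ij => mul_nonneg hμ.le (hu _ _), rfl⟩
  · rintro ⟨a, ha, rfl⟩
    -- the control applied at time `t` feeds the column block `M ^ (k - 1 - t) * B`
    refine ⟨fun t j => if h : t < k then a (⟨k - 1 - t, by omega⟩, j) / μ else 0,
      fun t j => ?_, Finset.sum_congr rfl fun ij _ => ?_⟩
    · dsimp only
      split_ifs
      exacts [div_nonneg (ha _) hμ.le, le_rfl]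
    · obtain ⟨⟨i, hi⟩, j⟩ := ij
      have hi' : k - 1 - (k - 1 - i) = i := by omega
      simp [show k - 1 - i < k by omega, hi', mul_div_cancel₀ _ hμ.ne']

end Reachability

theorem positive_reachability_iff_monomial_submatrix (n m k : ℕ) (μ : ℝ) (hμ : 0 < μ)
    (A : Matrix (Fin n) (Fin n) ℝ) (B : Matrix (Fin n) (Fin m) ℝ)
    (hpos : ∀ i j, 0 ≤ (1 + μ • A) i j) (hB : ∀ i j, 0 ≤ B i j) :
    (∀ xbar : Fin n → ℝ, (∀ i, 0 ≤ xbar i) →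
        ∃ u : ℕ → Fin m → ℝ, (∀ j i, 0 ≤ u j i) ∧
          xbar = ∑ i ∈ Finset.range k,
            μ • ((1 + μ • A) ^ i).mulVec (B.mulVec (u (k - 1 - i)))) ↔
      ∃ (f : Fin n → Fin k × Fin m) (c : Fin n → ℝ), (∀ l, 0 < c l) ∧
        ∀ l, (((1 + μ • A) ^ ((f l).1 : ℕ)).mulVec fun p => B p (f l).2) =
          c l • (Pi.single l 1 : Fin n → ℝ) :=
  (forall₂_congr fun x _ => exists_nonneg_control_iff hμ x).trans
    (forall_isNonnegCombination_iff (reachabilityColumn_nonneg hpos hB))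
end

section
/- For the discrete-time positive system x(t+1) = Fx(t) + Bu(t) with F = I + A entrywise nonnegative and k ≥ n: the system is positively reachable in k steps if and only if [B, FB, …, F^{n−1}B] contains an n×n monomial submatrix; in particular, reachability in k steps is equivalent to reachability in n steps. -/
open scoped Matrix Classical
open MeasureTheory

attribute [local instance] Matrix.linftyOpNormedRing Matrix.linftyOpNormedAlgebra

/-- Positive reachability in `k` steps from 0 for the discrete-time system
`x(t+1) = F x(t) + B u(t)`. -/
def PosReach {n m : ℕ} (F : Matrix (Fin n) (Fin n) ℝ) (B : Matrix (Fin n) (Fin m) ℝ)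
    (k : ℕ) : Prop :=
  ∀ xbar : Fin n → ℝ, (∀ i, 0 ≤ xbar i) →
    ∃ u : ℕ → Fin m → ℝ, (∀ j i, 0 ≤ u j i) ∧
      xbar = ∑ i ∈ Finset.range k, (F ^ i).mulVec (B.mulVec (u i))

/-!
Supports evolve along the digraph of `F`: the positive support of `F ^ t * b` is the `t`-th
out-neighbourhood of the support of `b`, and a nonnegative vector is a positive multiple of `e_l`
exactly when its support is `{l}`. Writing `e_l` as a reachable state forces some column
`F ^ t * b_j` to be such a multiple, so everything reduces to a statement about a finite digraph:
if the `t`-th out-neighbourhood of a vertex set `S` is `{l}`, this already happens at some time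
below the number of vertices.

For that, let `M` be the vertices all of whose walks die and `c` the return period of `{l}`.
Above `#M + c`, a first time at which a set reaches `{l}` is also a first time for one of its
points: dead points are dead after `#M` steps, and a live point that reached `{l}` earlier
reaches it again one period earlier, so otherwise the set itself would reach `{l}` a period
earlier. Descending from a point with first time `T` then gives points with every first time in
`[#M + c, T]`. They are distinct, lie outside `M`, and differ from `c` points whose first times
are `0, …, c - 1`, so `T` is less than the number of vertices.
-/

open Finset Function

namespace Finset

theorem biUnion_eq_singleton_iff {β : Type*} [DecidableEq β] {ι : Type*} {s : Finset ι}
    {f : ι → Finset β} {b : β} :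
    s.biUnion f = {b} ↔ (∀ i ∈ s, f i ⊆ {b}) ∧ ∃ i ∈ s, f i = {b} := by
  constructor
  · intro h
    have hsub : ∀ i ∈ s, f i ⊆ {b} := fun i hi => h ▸ subset_biUnion_of_mem f hi
    obtain ⟨i, hi, hbi⟩ := mem_biUnion.1 (h ▸ mem_singleton_self b)
    exact ⟨hsub, i, hi, subset_antisymm (hsub i hi) (singleton_subset_iff.2 hbi)⟩
  · rintro ⟨hsub, i, hi, hfi⟩
    exact subset_antisymm (biUnion_subset.2 hsub) (hfi ▸ subset_biUnion_of_mem f hi)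

end Finset

section SuccSet

variable {α : Type*} [DecidableEq α] (G : α → Finset α)

/-- `G v` is read as the set of out-neighbours of the vertex `v`. -/
def succSet (X : Finset α) : Finset α := X.biUnion G

def IsFirstHit (X Y : Finset α) (e : ℕ) : Prop :=
  (succSet G)^[e] X = Y ∧ ∀ i < e, (succSet G)^[i] X ≠ Y

def FirstHitAttained (Y : Finset α) (θ : ℕ) : Prop :=
  ∀ X e, θ ≤ e → IsFirstHit G X Y e → ∃ q ∈ X, IsFirstHit G {q} Y e

variable {G}

theorem iterate_succSet_eq_biUnion (j : ℕ) (X : Finset α) :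
    (succSet G)^[j] X = X.biUnion fun w => (succSet G)^[j] {w} := by
  induction j with
  | zero => exact biUnion_singleton_eq_self.symm
  | succ j ih =>
    simp only [iterate_succ_apply', ih, succSet, biUnion_biUnion]

theorem iterate_succSet_eq_singleton_iff {X : Finset α} {j : ℕ} {l : α} :
    (succSet G)^[j] X = {l} ↔
      (∀ w ∈ X, (succSet G)^[j] {w} ⊆ {l}) ∧ ∃ w ∈ X, (succSet G)^[j] {w} = {l} := by
  rw [iterate_succSet_eq_biUnion, biUnion_eq_singleton_iff]

theorem iterate_succSet_empty (j : ℕ) : (succSet G)^[j] ∅ = ∅ :=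
  iterate_fixed biUnion_empty j

theorem iterate_succSet_eq_empty_of_le {X : Finset α} {i j : ℕ}
    (h : (succSet G)^[i] X = ∅) (hij : i ≤ j) : (succSet G)^[j] X = ∅ := by
  rw [← Nat.sub_add_cancel hij, iterate_add_apply, h, iterate_succSet_empty]

theorem exists_isFirstHit {X Y : Finset α} {j : ℕ} (h : (succSet G)^[j] X = Y) :
    ∃ e ≤ j, IsFirstHit G X Y e :=
  ⟨Nat.find ⟨j, h⟩, Nat.find_min' _ h,
    Nat.find_spec (p := fun e => (succSet G)^[e] X = Y) ⟨j, h⟩, fun _ => Nat.find_min _⟩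

theorem IsFirstHit.eq {X Y : Finset α} {i j : ℕ} (hi : IsFirstHit G X Y i)
    (hj : IsFirstHit G X Y j) : i = j :=
  le_antisymm (not_lt.1 fun h => hi.2 j h hj.1) (not_lt.1 fun h => hj.2 i h hi.1)

theorem IsFirstHit.of_singleton_succ {w : α} {Y : Finset α} {e : ℕ}
    (h : IsFirstHit G {w} Y (e + 1)) : IsFirstHit G (G w) Y e := by
  have hG : G w = succSet G {w} := singleton_biUnion.symm
  refine ⟨?_, fun i hi => ?_⟩
  · rw [hG, ← iterate_succ_apply, h.1]
  · rw [hG, ← iterate_succ_apply]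
    exact h.2 (i + 1) (by omega)

theorem FirstHitAttained.exists_isFirstHit {Y : Finset α} {θ : ℕ}
    (hY : FirstHitAttained G Y θ) {w : α} {e : ℕ} (hw : IsFirstHit G {w} Y e) {j : ℕ}
    (hj : j ∈ Icc θ e) : ∃ v, IsFirstHit G {v} Y j := by
  induction e generalizing w with
  | zero => exact ⟨w, by rwa [show j = 0 by simp_all]⟩
  | succ e ih =>
    rw [mem_Icc] at hj
    obtain rfl | hje := eq_or_lt_of_le hj.2
    · exact ⟨w, hw⟩
    obtain ⟨q, -, hq⟩ := hY _ e (by omega) hw.of_singleton_succ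
    exact ih hq (mem_Icc.2 ⟨hj.1, by omega⟩)

theorem firstHitAttained_empty : FirstHitAttained G ∅ 1 := by
  rintro X (_ | e) he hX
  · omega
  have hlive : ((succSet G)^[e] X).Nonempty := nonempty_iff_ne_empty.2 (hX.2 e (by omega))
  rw [iterate_succSet_eq_biUnion, biUnion_nonempty] at hlive
  obtain ⟨q, hq, hqe⟩ := hlive
  refine ⟨q, hq, ?_, fun i hi hqi =>
    hqe.ne_empty (iterate_succSet_eq_empty_of_le hqi (by omega))⟩
  have hsub : (succSet G)^[e + 1] {q} ⊆ (succSet G)^[e + 1] X := by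
    rw [iterate_succSet_eq_biUnion _ X]
    exact subset_biUnion_of_mem (fun w => (succSet G)^[e + 1] {w}) hq
  exact subset_empty.1 (hX.1 ▸ hsub)

variable [Fintype α]

theorem card_le_card_filter_isFirstHit {Y : Finset α} {s : Finset ℕ}
    (h : ∀ j ∈ s, ∃ v, IsFirstHit G {v} Y j) :
    #s ≤ #{v | ∃ j ∈ s, IsFirstHit G {v} Y j} := by
  rcases s.eq_empty_or_nonempty with rfl | ⟨j₀, hj₀⟩
  · simp
  have : Nonempty α := let ⟨v, _⟩ := h j₀ hj₀; ⟨v⟩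
  choose! v hv using h
  refine card_le_card_of_injOn v (fun j hj => mem_filter.2 ⟨mem_univ _, j, hj, hv j hj⟩) ?_
  intro i hi j hj hij
  exact (hv i hi).eq (by rw [hij]; exact hv j hj)

theorem FirstHitAttained.lt_card {Y : Finset α} {θ : ℕ} (hY : FirstHitAttained G Y θ)
    {Z : Finset α} (hZ : θ ≤ #Z) (hZhit : ∀ v ∈ Z, ∀ j, IsFirstHit G {v} Y j → j < θ)
    {S : Finset α} {T : ℕ} (hS : IsFirstHit G S Y T) : T < Fintype.card α := by
  by_cases hT : T < θ
  · exact hT.trans_le (hZ.trans (card_le_univ Z))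
  obtain ⟨q, -, hq⟩ := hY S T (not_lt.1 hT) hS
  have hA := card_le_card_filter_isFirstHit fun j hj => hY.exists_isFirstHit hq hj
  have hdisj : Disjoint ({v | ∃ j ∈ Icc θ T, IsFirstHit G {v} Y j} : Finset α) Z := by
    refine disjoint_left.2 fun v hvA hvZ => ?_
    obtain ⟨j, hj, hvj⟩ := (mem_filter.1 hvA).2
    exact (hZhit v hvZ j hvj).not_ge (mem_Icc.1 hj).1
  have := card_union_of_disjoint hdisj ▸ card_le_univ _
  rw [Nat.card_Icc] at hA
  omega

variable (G) in
noncomputable def mortalSet : Finset α := {v | ∃ j, (succSet G)^[j] {v} = ∅}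

theorem iterate_card_mortalSet {v : α} (hv : v ∈ mortalSet G) :
    (succSet G)^[#(mortalSet G)] {v} = ∅ := by
  obtain ⟨j, hj⟩ := (mem_filter.1 hv).2
  obtain ⟨d, -, hd⟩ := exists_isFirstHit hj
  have hd0 : d ≠ 0 := by
    rintro rfl
    exact singleton_ne_empty v hd.1
  have hchain : #(Icc 1 d) ≤ #(mortalSet G) := by
    refine (card_le_card_filter_isFirstHit fun j hj =>
      firstHitAttained_empty.exists_isFirstHit hd hj).trans (card_le_card fun u hu => ?_)
    obtain ⟨j, -, hu⟩ := (mem_filter.1 hu).2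
    exact mem_filter.2 ⟨mem_univ u, j, hu.1⟩
  rw [Nat.card_Icc] at hchain
  exact iterate_succSet_eq_empty_of_le hd.1 (by omega)

theorem lt_card_mortalSet {v : α} (hv : v ∈ mortalSet G) {j : ℕ}
    (h : (succSet G)^[j] {v} ≠ ∅) : j < #(mortalSet G) :=
  not_le.1 fun hj => h (iterate_succSet_eq_empty_of_le (iterate_card_mortalSet hv) hj)

end SuccSet

section Period

variable {α : Type*} [DecidableEq α] {G : α → Finset α} {l : α}

variable (G l) in
/-- The least `c > 0` with `(succSet G)^[c] {l} = {l}`, or `0` if there is none. -/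
noncomputable def returnPeriod : ℕ := minimalPeriod (succSet G) {l}

theorem iterate_succSet_singleton_eq_self_iff {n : ℕ} :
    (succSet G)^[n] {l} = {l} ↔ returnPeriod G l ∣ n :=
  isPeriodicPt_iff_minimalPeriod_dvd

theorem returnPeriod_dvd_sub {q : α} {i j : ℕ} (hi : (succSet G)^[i] {q} = {l})
    (hj : (succSet G)^[j] {q} = {l}) (hij : i ≤ j) : returnPeriod G l ∣ j - i := by
  rw [show j = (j - i) + i by omega, iterate_add_apply, hi] at hj
  exact iterate_succSet_singleton_eq_self_iff.1 hj

theorem iterate_sub_returnPeriod {q : α} {j e : ℕ} (hj : (succSet G)^[j] {q} = {l})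
    (he : (succSet G)^[e] {q} = {l}) (hje : j < e) :
    (succSet G)^[e - returnPeriod G l] {q} = {l} := by
  have hdvd := returnPeriod_dvd_sub hj he hje.le
  have hc : returnPeriod G l ≤ e - j := Nat.le_of_dvd (by omega) hdvd
  rw [show e - returnPeriod G l = (e - j - returnPeriod G l) + j by omega, iterate_add_apply, hj]
  exact iterate_succSet_singleton_eq_self_iff.2 (Nat.dvd_sub hdvd dvd_rfl)

theorem exists_isFirstHit_of_lt_returnPeriod {i : ℕ} (hi : i < returnPeriod G l) :
    ∃ v, IsFirstHit G {v} {l} i := by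
  have hcycle : (succSet G)^[i] ((succSet G)^[returnPeriod G l - i] {l}) = {l} := by
    rw [← iterate_add_apply, Nat.add_sub_cancel' hi.le]
    exact iterate_succSet_singleton_eq_self_iff.2 dvd_rfl
  obtain ⟨-, v, -, hv⟩ := iterate_succSet_eq_singleton_iff.1 hcycle
  obtain ⟨j, hji, hj⟩ := exists_isFirstHit hv
  have := Nat.eq_zero_of_dvd_of_lt (returnPeriod_dvd_sub hj.1 hv hji) (by omega)
  exact ⟨v, by rwa [show i = j by omega]⟩

variable [Fintype α]

theorem notMem_mortalSet_of_returnPeriod_pos (hc : 0 < returnPeriod G l) {v : α} {j : ℕ}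
    (h : (succSet G)^[j] {v} = {l}) : v ∉ mortalSet G := by
  intro hv
  have hlive : (succSet G)^[returnPeriod G l * #(mortalSet G) + j] {v} = {l} := by
    rw [iterate_add_apply, h]
    exact iterate_succSet_singleton_eq_self_iff.2 (dvd_mul_right _ _)
  have := lt_card_mortalSet hv (hlive ▸ singleton_ne_empty l)
  nlinarith

theorem firstHitAttained_singleton :
    FirstHitAttained G {l} (#(mortalSet G) + returnPeriod G l) := by
  intro X e he hX
  by_contra! hnone
  have hearly : ∀ q ∈ X, (succSet G)^[e] {q} = {l} → ∃ j < e, (succSet G)^[j] {q} = {l} := by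
    intro q hq hqe
    obtain ⟨j, hje, hj⟩ := exists_isFirstHit hqe
    exact ⟨j, lt_of_le_of_ne hje fun h => hnone q hq (h ▸ hj), hj.1⟩
  obtain ⟨hsub, q₀, hq₀, hq₀e⟩ := iterate_succSet_eq_singleton_iff.1 hX.1
  obtain ⟨j₀, hj₀, hq₀j⟩ := hearly q₀ hq₀ hq₀e
  have hc : 0 < returnPeriod G l :=
    Nat.pos_of_dvd_of_pos (returnPeriod_dvd_sub hq₀j hq₀e hj₀.le) (by omega)
  refine hX.2 (e - returnPeriod G l) (by omega) (iterate_succSet_eq_singleton_iff.2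
    ⟨fun q hq => ?_, q₀, hq₀, iterate_sub_returnPeriod hq₀j hq₀e hj₀⟩)
  rcases subset_singleton_iff.1 (hsub q hq) with hdead | hlive
  · have hq : q ∈ mortalSet G := mem_filter.2 ⟨mem_univ q, e, hdead⟩
    rw [iterate_succSet_eq_empty_of_le (iterate_card_mortalSet hq) (by omega)]
    exact empty_subset _
  · obtain ⟨j, hj, hqj⟩ := hearly q hq hlive
    exact (iterate_sub_returnPeriod hqj hlive hj).le

end Period

theorem exists_lt_card_iterate_succSet_eq_singleton {α : Type*} [DecidableEq α] [Fintype α]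
    {G : α → Finset α} {S : Finset α} {l : α} {t : ℕ} (h : (succSet G)^[t] S = {l}) :
    ∃ t' < Fintype.card α, (succSet G)^[t'] S = {l} := by
  let B : Finset α := {v | ∃ j ∈ range (returnPeriod G l), IsFirstHit G {v} {l} j}
  have hB : returnPeriod G l ≤ #B := (card_range _).symm.trans_le <|
    card_le_card_filter_isFirstHit fun j hj => exists_isFirstHit_of_lt_returnPeriod (mem_range.1 hj)
  have hdisj : Disjoint (mortalSet G) B := by
    refine disjoint_right.2 fun v hv => ?_
    obtain ⟨j, hj, hvj⟩ := (mem_filter.1 hv).2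
    exact notMem_mortalSet_of_returnPeriod_pos (by rw [mem_range] at hj; omega) hvj.1
  have hZhit : ∀ v ∈ mortalSet G ∪ B, ∀ j, IsFirstHit G {v} {l} j →
      j < #(mortalSet G) + returnPeriod G l := by
    intro v hv j hj
    rcases mem_union.1 hv with hM | hB
    · have := lt_card_mortalSet hM (hj.1 ▸ singleton_ne_empty l)
      omega
    · obtain ⟨i, hi, hvi⟩ := (mem_filter.1 hB).2
      rw [hj.eq hvi]
      rw [mem_range] at hi
      omega
  obtain ⟨T, -, hT⟩ := exists_isFirstHit h
  exact ⟨T, firstHitAttained_singleton.lt_card (by rw [card_union_of_disjoint hdisj]; omega)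
    hZhit hT, hT.1⟩

section PosSupp

variable {ι : Type*} [Fintype ι]

noncomputable def posSupp (v : ι → ℝ) : Finset ι := {i | 0 < v i}

noncomputable def Matrix.supportGraph (F : Matrix ι ι ℝ) (p : ι) : Finset ι := {q | 0 < F q p}

theorem mem_posSupp {v : ι → ℝ} {i : ι} : i ∈ posSupp v ↔ 0 < v i := by
  simp [posSupp]

theorem posSupp_smul_of_pos {a : ℝ} (ha : 0 < a) (v : ι → ℝ) : posSupp (a • v) = posSupp v := by
  ext i
  simp [mem_posSupp, mul_pos_iff_of_pos_left ha]

theorem mulVec_nonneg_of_nonneg {F : Matrix ι ι ℝ} (hF : ∀ i j, 0 ≤ F i j) {v : ι → ℝ}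
    (hv : 0 ≤ v) : 0 ≤ F.mulVec v :=
  fun i => sum_nonneg fun p _ => mul_nonneg (hF i p) (hv p)

variable [DecidableEq ι]

theorem posSupp_sum {κ : Type*} {s : Finset κ} {v : κ → ι → ℝ} (hv : ∀ k ∈ s, 0 ≤ v k) :
    posSupp (∑ k ∈ s, v k) = s.biUnion fun k => posSupp (v k) := by
  ext i
  simp only [mem_posSupp, Finset.sum_apply, mem_biUnion]
  exact sum_pos_iff_of_nonneg fun k hk => hv k hk i

theorem exists_posSupp_eq_singleton_of_sum {κ : Type*} {s : Finset κ} {v : κ → ι → ℝ}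
    (hv : ∀ k ∈ s, 0 ≤ v k) {l : ι} (h : posSupp (∑ k ∈ s, v k) = {l}) :
    ∃ k ∈ s, posSupp (v k) = {l} :=
  (biUnion_eq_singleton_iff.1 (posSupp_sum hv ▸ h)).2

theorem posSupp_eq_singleton_iff {v : ι → ℝ} (hv : 0 ≤ v) {l : ι} :
    posSupp v = {l} ↔ ∃ c : ℝ, 0 < c ∧ v = c • Pi.single l 1 := by
  constructor
  · intro h
    refine ⟨v l, mem_posSupp.1 (h ▸ mem_singleton_self l), funext fun i => ?_⟩
    by_cases hi : i = l
    · simp [hi]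
    · have : ¬ 0 < v i := fun hpos => hi (mem_singleton.1 (h ▸ mem_posSupp.2 hpos))
      simp [hi, le_antisymm (not_lt.1 this) (hv i)]
  · rintro ⟨c, hc, rfl⟩
    ext i
    by_cases hi : i = l <;> simp [mem_posSupp, hi, hc]

variable {F : Matrix ι ι ℝ}

theorem posSupp_mulVec (hF : ∀ i j, 0 ≤ F i j) {v : ι → ℝ} (hv : 0 ≤ v) :
    posSupp (F.mulVec v) = succSet F.supportGraph (posSupp v) := by
  ext q
  simp only [mem_posSupp, succSet, mem_biUnion, Matrix.supportGraph, mem_filter, mem_univ,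
    true_and, Matrix.mulVec, dotProduct]
  rw [sum_pos_iff_of_nonneg fun p _ => mul_nonneg (hF q p) (hv p)]
  simp only [mem_univ, true_and]
  exact exists_congr fun p => ⟨fun h => ((mul_pos_iff.1 h).resolve_right fun h' =>
    (hF q p).not_gt h'.1).symm, fun h => mul_pos h.2 h.1⟩

theorem posSupp_pow_mulVec (hF : ∀ i j, 0 ≤ F i j) (t : ℕ) {v : ι → ℝ} (hv : 0 ≤ v) :
    posSupp ((F ^ t).mulVec v) = (succSet F.supportGraph)^[t] (posSupp v) := by
  induction t generalizing v with
  | zero => simp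
  | succ t ih =>
    rw [pow_succ, ← Matrix.mulVec_mulVec, ih (mulVec_nonneg_of_nonneg hF hv),
      posSupp_mulVec hF hv, iterate_succ_apply]

theorem pow_mulVec_nonneg (hF : ∀ i j, 0 ≤ F i j) (t : ℕ) {v : ι → ℝ} (hv : 0 ≤ v) :
    0 ≤ (F ^ t).mulVec v := by
  induction t generalizing v with
  | zero => simpa using hv
  | succ t ih =>
    rw [pow_succ, ← Matrix.mulVec_mulVec]
    exact ih (mulVec_nonneg_of_nonneg hF hv)

end PosSupp

theorem mulVec_mulVec_eq_sum_smul {ι κ μ : Type*} [Fintype κ] [Fintype μ] [DecidableEq μ]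
    (M : Matrix ι κ ℝ) (B : Matrix κ μ ℝ) (u : μ → ℝ) :
    M.mulVec (B.mulVec u) = ∑ j, u j • M.mulVec fun p => B p j := by
  conv_lhs => rw [← univ_sum_single u]
  rw [Matrix.mulVec_sum, Matrix.mulVec_sum]
  refine sum_congr rfl fun j _ => ?_
  rw [Matrix.mulVec_single, op_smul_eq_smul, Matrix.mulVec_smul]
  rfl

section Reachability

variable {n m : ℕ} {F : Matrix (Fin n) (Fin n) ℝ} {B : Matrix (Fin n) (Fin m) ℝ}

/-- Some `n` columns of `[B, FB, …, F^{n-1}B]` are positive multiples of distinct standard basis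
vectors: column `(f l).2` of `F ^ (f l).1 * B` is `c l • e_l`. -/
def HasMonomialSubmatrix (F : Matrix (Fin n) (Fin n) ℝ) (B : Matrix (Fin n) (Fin m) ℝ) : Prop :=
  ∃ (f : Fin n → Fin n × Fin m) (c : Fin n → ℝ), (∀ l, 0 < c l) ∧
    ∀ l, ((F ^ ((f l).1 : ℕ)).mulVec fun p => B p (f l).2) = c l • (Pi.single l 1 : Fin n → ℝ)


theorem exists_pow_mulVec_col_eq_of_posReach (hF : ∀ i j, 0 ≤ F i j) (hB : ∀ i j, 0 ≤ B i j)
    {k : ℕ} (hP : PosReach F B k) (l : Fin n) :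
    ∃ i < n, ∃ j, ∃ c : ℝ, 0 < c ∧
      ((F ^ i).mulVec fun p => B p j) = c • (Pi.single l 1 : Fin n → ℝ) := by
  have hcol : ∀ i j, 0 ≤ (F ^ i).mulVec fun p => B p j :=
    fun i j => pow_mulVec_nonneg hF i fun p => hB p j
  have hl : (0 : Fin n → ℝ) ≤ Pi.single l 1 := Pi.single_nonneg.2 zero_le_one
  obtain ⟨u, hu, hx⟩ := hP (Pi.single l 1) hl
  have hsupp : posSupp (∑ i ∈ range k, ∑ j, u i j • (F ^ i).mulVec fun p => B p j) = {l} := by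
    simp_rw [← mulVec_mulVec_eq_sum_smul, ← hx, posSupp_eq_singleton_iff hl]
    exact ⟨1, one_pos, (one_smul _ _).symm⟩
  obtain ⟨i, -, hi⟩ := exists_posSupp_eq_singleton_of_sum
    (fun i _ => sum_nonneg fun j _ => smul_nonneg (hu i j) (hcol i j)) hsupp
  obtain ⟨j, -, hj⟩ := exists_posSupp_eq_singleton_of_sum
    (fun j _ => smul_nonneg (hu i j) (hcol i j)) hi
  have hpos : 0 < u i j := (hu i j).lt_of_ne fun h0 => by
    simp [← h0, posSupp] at hj
  rw [posSupp_smul_of_pos hpos, posSupp_pow_mulVec hF _ fun p => hB p j] at hj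
  obtain ⟨i', hi', hi'l⟩ := exists_lt_card_iterate_succSet_eq_singleton hj
  rw [← posSupp_pow_mulVec hF _ fun p => hB p j, posSupp_eq_singleton_iff (hcol i' j)] at hi'l
  exact ⟨i', by simpa using hi', j, hi'l⟩

theorem hasMonomialSubmatrix_of_posReach (hF : ∀ i j, 0 ≤ F i j) (hB : ∀ i j, 0 ≤ B i j)
    {k : ℕ} (hP : PosReach F B k) : HasMonomialSubmatrix F B := by
  choose i hi j c hc hcol using exists_pow_mulVec_col_eq_of_posReach hF hB hP
  exact ⟨fun l => (⟨i l, hi l⟩, j l), c, hc, hcol⟩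

/-- Column `(f l).2` is used at time `(f l).1 < n ≤ k` with weight `x l / c l`. -/
theorem HasMonomialSubmatrix.posReach (h : HasMonomialSubmatrix F B) {k : ℕ} (hk : n ≤ k) :
    PosReach F B k := by
  obtain ⟨f, c, hc, hf⟩ := h
  intro x hx
  let w : Fin n → ℝ := fun l => x l / c l
  refine ⟨fun i => ∑ l with ((f l).1 : ℕ) = i, w l • Pi.single (f l).2 1, fun i j => ?_, ?_⟩
  · simp only [Finset.sum_apply, Pi.smul_apply, smul_eq_mul]
    exact sum_nonneg fun l _ =>
      mul_nonneg (div_nonneg (hx l) (hc l).le)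
        ((Pi.single_nonneg.2 zero_le_one : (0 : Fin m → ℝ) ≤ Pi.single (f l).2 1) j)
  have hmaps : ∀ l ∈ (univ : Finset (Fin n)), ((f l).1 : ℕ) ∈ range k :=
    fun l _ => mem_range.2 ((f l).1.isLt.trans_le hk)
  calc x = ∑ l, x l • Pi.single l 1 := pi_eq_sum_univ' x
    _ = ∑ l, w l • (F ^ ((f l).1 : ℕ)).mulVec fun p => B p (f l).2 :=
        sum_congr rfl fun l _ => by rw [hf, smul_smul, div_mul_cancel₀ _ (hc l).ne']
    _ = ∑ i ∈ range k, ∑ l with ((f l).1 : ℕ) = i,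
          w l • (F ^ ((f l).1 : ℕ)).mulVec fun p => B p (f l).2 :=
        (sum_fiberwise_of_maps_to hmaps _).symm
    _ = _ := by
      refine sum_congr rfl fun i _ => ?_
      simp only [Matrix.mulVec_sum, Matrix.mulVec_smul, Matrix.mulVec_single_one]
      exact sum_congr rfl fun l hl => by rw [(mem_filter.1 hl).2]; rfl

end Reachability

theorem discrete_positive_reachability (n m : ℕ)
    (F : Matrix (Fin n) (Fin n) ℝ) (B : Matrix (Fin n) (Fin m) ℝ)
    (hF : ∀ i j, 0 ≤ F i j) (hB : ∀ i j, 0 ≤ B i j) (k : ℕ) (hk : n ≤ k) :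
    (PosReach F B k ↔
      ∃ (f : Fin n → Fin n × Fin m) (c : Fin n → ℝ), (∀ l, 0 < c l) ∧
        ∀ l, ((F ^ ((f l).1 : ℕ)).mulVec fun p => B p (f l).2) = c l • (Pi.single l 1 : Fin n → ℝ)) ∧
    (PosReach F B k ↔ PosReach F B n) := by
  have key : ∀ k, n ≤ k → (PosReach F B k ↔ HasMonomialSubmatrix F B) := fun _ hk =>
    ⟨hasMonomialSubmatrix_of_posReach hF hB, fun h => h.posReach hk⟩
  exact ⟨key k hk, (key k hk).trans (key n le_rfl).symm⟩
end

section
/- If A is an n×n diagonal matrix and B is an n×m nonnegative matrix containing an n×n monomial submatrix, then the continuous-time system x' = Ax + Bu is positively reachable on any interval [t₀,t₁] with t₀ < t₁: every x̄ ∈ ℝⁿ₊ can be reached from x(t₀)=0 at time t₁ with nonnegative controls. -/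
open scoped Matrix Classical
open MeasureTheory

attribute [local instance] Matrix.linftyOpNormedRing Matrix.linftyOpNormedAlgebra

/-!
For diagonal `A = diagonal d` the system decouples: a constant control `u` produces the state
`x(t₁)ᵢ = (∫ e^{(t₁-τ) dᵢ} dτ) · (B u)ᵢ`, and each of these integrals is positive. So it suffices
to solve `B u = w` with `u ≥ 0` for the nonnegative target `wᵢ = x̄ᵢ / ∫ e^{(t₁-τ) dᵢ} dτ`, which
the monomial columns of `B` do: put `wₗ / cₗ` on the column `f l`.
-/

theorem intervalIntegral.eval_integral {ι : Type*} [Fintype ι] {f : ℝ → ι → ℝ} {a b : ℝ}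
    (hf : IntervalIntegrable f volume a b) (i : ι) :
    (∫ τ in a..b, f τ) i = ∫ τ in a..b, f τ i :=
  ((ContinuousLinearMap.proj (R := ℝ) (φ := fun _ : ι => ℝ) i).intervalIntegral_comp_comm hf).symm

theorem Matrix.exp_smul_diagonal {ι : Type*} [Fintype ι] [DecidableEq ι] (s : ℝ) (d : ι → ℝ) :
    NormedSpace.exp (s • Matrix.diagonal d) = Matrix.diagonal fun i => Real.exp (s * d i) := by
  rw [← Matrix.diagonal_smul, Matrix.exp_diagonal]
  congr 1
  funext i
  simp [Real.exp_eq_exp_ℝ]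

theorem integral_exp_smul_diagonal_mulVec {ι : Type*} [Fintype ι] [DecidableEq ι]
    (d v : ι → ℝ) (t₀ t₁ : ℝ) :
    (∫ τ in t₀..t₁, NormedSpace.exp ((t₁ - τ) • Matrix.diagonal d) *ᵥ v) =
      fun i => (∫ τ in t₀..t₁, Real.exp ((t₁ - τ) * d i)) * v i := by
  have hintegrand : (fun τ => NormedSpace.exp ((t₁ - τ) • Matrix.diagonal d) *ᵥ v) =
      fun τ i => Real.exp ((t₁ - τ) * d i) * v i := by
    funext τ i
    rw [Matrix.exp_smul_diagonal, Matrix.mulVec_diagonal]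
  rw [hintegrand]
  funext i
  rw [intervalIntegral.eval_integral (Continuous.intervalIntegrable (by fun_prop) _ _),
    intervalIntegral.integral_mul_const]

theorem Matrix.exists_nonneg_mulVec_eq_of_monomial_columns {ι κ : Type*}
    [Fintype ι] [DecidableEq ι] [Fintype κ] [DecidableEq κ]
    {B : Matrix ι κ ℝ} {f : ι → κ} {c : ι → ℝ} (hc : ∀ l, 0 < c l)
    (hcol : ∀ l, (fun p => B p (f l)) = c l • (Pi.single l 1 : ι → ℝ))
    {w : ι → ℝ} (hw : ∀ i, 0 ≤ w i) :
    ∃ u : κ → ℝ, (∀ j, 0 ≤ u j) ∧ B *ᵥ u = w := by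
  refine ⟨∑ l, Pi.single (f l) (w l / c l), fun j => ?_, ?_⟩
  · simp only [Finset.sum_apply]
    refine Finset.sum_nonneg fun l _ => ?_
    rcases eq_or_ne j (f l) with rfl | hj
    · simpa using div_nonneg (hw l) (hc l).le
    · simp [hj]
  · have hcol' : ∀ l, B.col (f l) = c l • Pi.single l 1 := hcol
    simp only [Matrix.mulVec_sum, Matrix.mulVec_single, hcol', op_smul_eq_smul, smul_smul]
    simp_rw [div_mul_cancel₀ _ (hc _).ne', ← Pi.single_smul', smul_eq_mul, mul_one]
    exact Finset.univ_sum_single w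

theorem diagonal_monomial_implies_positive_reachability_general (n m : ℕ)
    (A : Matrix (Fin n) (Fin n) ℝ) (hA : A.IsDiag)
    (B : Matrix (Fin n) (Fin m) ℝ)
    (hmono : ∃ (f : Fin n → Fin m) (c : Fin n → ℝ), (∀ l, 0 < c l) ∧
      ∀ l, (fun p => B p (f l)) = c l • (Pi.single l 1 : Fin n → ℝ)) :
    ∀ t₀ t₁ : ℝ, t₀ < t₁ → ∀ xbar : Fin n → ℝ, (∀ i, 0 ≤ xbar i) →
      ∃ u : ℝ → Fin m → ℝ, Continuous u ∧ (∀ τ j, 0 ≤ u τ j) ∧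
        (∫ τ in t₀..t₁, (NormedSpace.exp ((t₁ - τ) • A)).mulVec (B.mulVec (u τ))) = xbar := by
  obtain ⟨f, c, hc, hcol⟩ := hmono
  intro t₀ t₁ ht xbar hxbar
  set gain : Fin n → ℝ := fun i => ∫ τ in t₀..t₁, Real.exp ((t₁ - τ) * A.diag i)
  have hgain : ∀ i, 0 < gain i := fun i =>
    intervalIntegral.intervalIntegral_pos_of_pos
      (Continuous.intervalIntegrable (by fun_prop) _ _) (fun _ => Real.exp_pos _) ht
  obtain ⟨u, hu, hBu⟩ := Matrix.exists_nonneg_mulVec_eq_of_monomial_columns hc hcol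
    (w := fun i => xbar i / gain i) fun i => div_nonneg (hxbar i) (hgain i).le
  refine ⟨fun _ => u, continuous_const, fun _ => hu, ?_⟩
  simp only [hBu]
  rw [← (Matrix.isDiag_iff_diagonal_diag A).mp hA, integral_exp_smul_diagonal_mulVec]
  funext i
  exact mul_div_cancel₀ _ (hgain i).ne'

theorem diagonal_monomial_implies_positive_reachability (n m : ℕ)
    (A : Matrix (Fin n) (Fin n) ℝ) (hA : A.IsDiag)
    (B : Matrix (Fin n) (Fin m) ℝ) (hB : ∀ i j, 0 ≤ B i j)
    (hmono : ∃ (f : Fin n → Fin m) (c : Fin n → ℝ), (∀ l, 0 < c l) ∧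
      ∀ l, (fun p => B p (f l)) = c l • (Pi.single l 1 : Fin n → ℝ)) :
    ∀ t₀ t₁ : ℝ, t₀ < t₁ → ∀ xbar : Fin n → ℝ, (∀ i, 0 ≤ xbar i) →
      ∃ u : ℝ → Fin m → ℝ, Continuous u ∧ (∀ τ j, 0 ≤ u τ j) ∧
        (∫ τ in t₀..t₁, (NormedSpace.exp ((t₁ - τ) • A)).mulVec (B.mulVec (u τ))) = xbar :=
  diagonal_monomial_implies_positive_reachability_general n m A hA B hmono
end

section
/- If the Gram matrix W = ∫_{t₀}^{t₁} e^{A(t₁−τ)} B Bᵀ (e^{A(t₁−τ)})ᵀ dτ of the continuous-time positive system is monomial, then the system x' = Ax + Bu is positively reachable on [t₀,t₁]. -/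
open scoped Matrix Classical
open MeasureTheory

attribute [local instance] Matrix.linftyOpNormedRing Matrix.linftyOpNormedAlgebra

/-!
With `c := W⁻¹ x̄`, which is nonnegative because the inverse of a monomial matrix is again
monomial, the control `u(τ) = Bᵀ e^{A(t₁-τ)}ᵀ c` is nonnegative on `[t₀, t₁]` and steers the
system to `∫ e^{A(t₁-τ)} B Bᵀ e^{A(t₁-τ)}ᵀ c dτ = W c = x̄`.
-/

namespace Matrix

variable {ι κ : Type*} [Fintype κ]

theorem mulVec_nonneg_s14 {R : Type*} [Semiring R] [PartialOrder R] [IsOrderedRing R]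
    {M : Matrix ι κ R} (hM : ∀ i j, 0 ≤ M i j) {x : κ → R} (hx : 0 ≤ x) : 0 ≤ M *ᵥ x :=
  fun i => Finset.sum_nonneg fun j _ => mul_nonneg (hM i j) (hx j)

theorem intervalIntegral_mulVec [Fintype ι] {M : ℝ → Matrix ι κ ℝ} {a b : ℝ}
    (hM : ∀ i j, IntervalIntegrable (fun τ => M τ i j) volume a b) (c : κ → ℝ) :
    ∫ τ in a..b, M τ *ᵥ c = (of fun i j => ∫ τ in a..b, M τ i j) *ᵥ c := by
  have hMc : IntervalIntegrable (fun τ => M τ *ᵥ c) volume a b := by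
    simp only [intervalIntegrable_iff, IntegrableOn, integrable_pi_iff, mulVec, dotProduct]
    exact fun i => integrable_finsetSum _ fun j _ =>
      ((intervalIntegrable_iff.1 (hM i j)).mul_const (c j))
  funext i
  rw [← ContinuousLinearMap.proj_apply (R := ℝ) i (∫ τ in a..b, M τ *ᵥ c),
    ← ContinuousLinearMap.intervalIntegral_comp_comm _ hMc]
  simp only [ContinuousLinearMap.proj_apply, mulVec, dotProduct, of_apply]
  rw [intervalIntegral.integral_finsetSum fun j _ => (hM i j).mul_const (c j)]
  simp only [intervalIntegral.integral_mul_const]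

end Matrix

theorem IsMonomial.exists_nonneg_mulVec_eq {n : ℕ} {W : Matrix (Fin n) (Fin n) ℝ}
    (hW : IsMonomial W) {x : Fin n → ℝ} (hx : 0 ≤ x) : ∃ c, 0 ≤ c ∧ W *ᵥ c = x := by
  obtain ⟨hW_nonneg, hrow, hcol⟩ := hW
  choose r hr hr_unique using hcol
  refine ⟨fun j => x (r j) / W (r j) j, fun j => div_nonneg (hx _) (hr j).le, funext fun k => ?_⟩
  obtain ⟨j₀, hj₀, hj₀_unique⟩ := hrow k
  have hrk : r j₀ = k := (hr_unique j₀ k hj₀).symm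
  have hzero : ∀ j, j ≠ j₀ → W k j = 0 := fun j hj =>
    (hW_nonneg k j).eq_or_lt.elim Eq.symm fun hpos => absurd (hj₀_unique j hpos) hj
  rw [Matrix.mulVec, dotProduct, Finset.sum_eq_single j₀ (fun j _ hj => by simp [hzero j hj])
    (by simp), hrk, mul_div_cancel₀ _ hj₀.ne']

theorem gram_monomial_implies_positive_reachability (n m : ℕ)
    (A : Matrix (Fin n) (Fin n) ℝ) (B : Matrix (Fin n) (Fin m) ℝ)
    (hA : ∀ t : ℝ, 0 ≤ t → ∀ i j, 0 ≤ NormedSpace.exp (t • A) i j)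
    (hB : ∀ i j, 0 ≤ B i j)
    (t₀ t₁ : ℝ) (ht : t₀ < t₁)
    (W : Matrix (Fin n) (Fin n) ℝ)
    (hW : ∀ i j, W i j = ∫ τ in t₀..t₁,
      (NormedSpace.exp ((t₁ - τ) • A) * B * Bᵀ *
        (NormedSpace.exp ((t₁ - τ) • A))ᵀ) i j)
    (hWmono : IsMonomial W) :
    ∀ xbar : Fin n → ℝ, (∀ i, 0 ≤ xbar i) →
      ∃ u : ℝ → Fin m → ℝ, (∀ τ j, 0 ≤ u τ j) ∧
        IntervalIntegrable
          (fun τ => (NormedSpace.exp ((t₁ - τ) • A)).mulVec (B.mulVec (u τ)))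
          volume t₀ t₁ ∧
        (∫ τ in t₀..t₁, (NormedSpace.exp ((t₁ - τ) • A)).mulVec (B.mulVec (u τ))) = xbar := by
  intro xbar hxbar
  obtain ⟨c, hc, hWc⟩ := hWmono.exists_nonneg_mulVec_eq hxbar
  set E : ℝ → Matrix (Fin n) (Fin n) ℝ := fun τ => NormedSpace.exp ((t₁ - τ) • A)
  have hE : Continuous E :=
    NormedSpace.exp_continuous.comp ((continuous_const.sub continuous_id).smul continuous_const)
  set M : ℝ → Matrix (Fin n) (Fin n) ℝ := fun τ => E τ * B * Bᵀ * (E τ)ᵀ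
  have hM : Continuous M :=
    ((hE.matrix_mul continuous_const).matrix_mul continuous_const).matrix_mul hE.matrix_transpose
  set u : ℝ → Fin m → ℝ := (Set.Iic t₁).indicator fun τ => Bᵀ *ᵥ ((E τ)ᵀ *ᵥ c)
  have hu : ∀ τ, 0 ≤ u τ := Set.indicator_nonneg fun τ (hτ : τ ≤ t₁) =>
    Matrix.mulVec_nonneg_s14 (fun i j => hB j i)
      (Matrix.mulVec_nonneg_s14 (fun i j => hA _ (sub_nonneg.2 hτ) j i) hc)
  have hu_eq : Set.EqOn (fun τ => E τ *ᵥ (B *ᵥ u τ)) (fun τ => M τ *ᵥ c) (Set.uIcc t₀ t₁) := by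
    intro τ hτ
    have hτ : τ ≤ t₁ := (Set.uIcc_of_le ht.le ▸ hτ).2
    simp only [u, Set.indicator_of_mem (show τ ∈ Set.Iic t₁ from hτ), M, Matrix.mulVec_mulVec,
      Matrix.mul_assoc]
  refine ⟨u, hu, ((hM.matrix_mulVec continuous_const).continuousOn.congr hu_eq).intervalIntegrable,
    ?_⟩
  rw [intervalIntegral.integral_congr hu_eq, Matrix.intervalIntegral_mulVec
    (fun i j => (hM.matrix_elem i j).intervalIntegrable t₀ t₁), ← hWc]
  congr 1
  exact (Matrix.ext hW).symm
end
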